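/- arXiv:math/0501315 — 8 statements merged into one kernel-verified Lean document; each statement's English description precedes it below -/
import Mathlib

section
/- In the commutative monoid Q presented by ⟨x, z, a, b | x² = 1, a² = 1, z⁴ = z², b⁴ = b², abz = b, b³x = b², z³a = z²⟩, the identity z²*b = b holds (this is one of the rewrite rules of the confluent rewriting system for Q). -/
theorem stmt9_general {Q : Type*} [CommMonoid Q] (z a b : Q)
    (ha : a ^ 2 = 1) (habz : a * b * z = b) :
    z ^ 2 * b = b := by
  have hbz : b * z = a * b := by
    calc b * z = a ^ 2 * (b * z) := by rw [ha, one_mul]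
      _ = a * (a * b * z) := by rw [sq]; ac_rfl
      _ = a * b := by rw [habz]
  calc z ^ 2 * b = b * z * z := by rw [sq]; ac_rfl
    _ = b := by rw [hbz, habz]

/-- In the misère quotient of 0.123, `z² * b = b`. -/
theorem stmt9 {Q : Type*} [CommMonoid Q] (x z a b : Q)
    (hx : x ^ 2 = 1) (ha : a ^ 2 = 1) (hz : z ^ 4 = z ^ 2) (hb : b ^ 4 = b ^ 2)
    (habz : a * b * z = b) (hbx : b ^ 3 * x = b ^ 2) (hza : z ^ 3 * a = z ^ 2) :
    z ^ 2 * b = b :=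
  stmt9_general z a b ha habz
end

section
/- In the commutative monoid Q presented by ⟨x, z, a, b | x² = 1, a² = 1, z⁴ = z², b⁴ = b², abz = b, b³x = b², z³a = z²⟩, the identity a*b = z*b holds. -/
theorem stmt10_general {Q : Type*} [CommMonoid Q] (z a b : Q)
    (ha : a ^ 2 = 1) (habz : a * b * z = b) :
    a * b = z * b := by
  calc a * b = a * (a * b * z) := by rw [habz]
    _ = a ^ 2 * (z * b) := by rw [sq]; ac_rfl
    _ = z * b := by rw [ha, one_mul]

/-- In the misère quotient of 0.123, `a * b = z * b`. -/
theorem stmt10 {Q : Type*} [CommMonoid Q] (x z a b : Q)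
    (hx : x ^ 2 = 1) (ha : a ^ 2 = 1) (hz : z ^ 4 = z ^ 2) (hb : b ^ 4 = b ^ 2)
    (habz : a * b * z = b) (hbx : b ^ 3 * x = b ^ 2) (hza : z ^ 3 * a = z ^ 2) :
    a * b = z * b :=
  stmt10_general z a b ha habz
end

section
/- In the commutative monoid Q presented by ⟨x, z, a, b | x² = 1, a² = 1, z⁴ = z², b⁴ = b², abz = b, b³x = b², z³a = z²⟩, the element x*z²*a*b³ equals z*b². (This computes the quotient value of the 0.123 position with heaps 1, 3, 4, 8, 9, 21.) -/
theorem stmt12_general {Q : Type*} [CommMonoid Q] (x z a b : Q)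
    (habz : a * b * z = b) (hbx : b ^ 3 * x = b ^ 2) :
    x * z ^ 2 * a * b ^ 3 = z * b ^ 2 := by
  calc x * z ^ 2 * a * b ^ 3 = z ^ 2 * a * (b ^ 3 * x) := by ac_rfl
    _ = z * (a * b * z) * b := by rw [hbx, sq, sq]; ac_rfl
    _ = z * b ^ 2 := by rw [habz, sq, mul_assoc]

/-- In the misère quotient of 0.123, `x * z² * a * b³ = z * b²`. -/
theorem stmt12 {Q : Type*} [CommMonoid Q] (x z a b : Q)
    (hx : x ^ 2 = 1) (ha : a ^ 2 = 1) (hz : z ^ 4 = z ^ 2) (hb : b ^ 4 = b ^ 2)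
    (habz : a * b * z = b) (hbx : b ^ 3 * x = b ^ 2) (hza : z ^ 3 * a = z ^ 2) :
    x * z ^ 2 * a * b ^ 3 = z * b ^ 2 :=
  stmt12_general x z a b habz hbx
end

section
/- In the commutative monoid Q presented by ⟨x, z, a, b | x² = 1, a² = 1, z⁴ = z², b⁴ = b², abz = b, b³x = b², z³a = z²⟩, the elements {b², x*b², z*b², x*z*b²} form an ideal: for every generator g ∈ {x, z, a, b} and every u in this set, g*u is again in the set. -/
/-- In the misère quotient of 0.123, `{b², xb², zb², xzb²}` is an ideal:
it is closed under multiplication by each generator. -/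
theorem stmt13 {Q : Type*} [CommMonoid Q] (x z a b : Q)
    (hx : x ^ 2 = 1) (ha : a ^ 2 = 1) (hz : z ^ 4 = z ^ 2) (hb : b ^ 4 = b ^ 2)
    (habz : a * b * z = b) (hbx : b ^ 3 * x = b ^ 2) (hza : z ^ 3 * a = z ^ 2) :
    ∀ u ∈ ({b ^ 2, x * b ^ 2, z * b ^ 2, x * z * b ^ 2} : Set Q),
      ∀ g ∈ ({x, z, a, b} : Set Q),
        g * u ∈ ({b ^ 2, x * b ^ 2, z * b ^ 2, x * z * b ^ 2} : Set Q) := by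
  -- helper facts
  have hxx : x * x = 1 := by rw [← pow_two]; exact hx
  have hab : a * b = b * z := by
    have h := congrArg (a * ·) habz
    calc a * b = a * (a * b * z) := h.symm
      _ = (a * a) * (b * z) := by ac_rfl
      _ = b * z := by rw [← pow_two, ha, one_mul]
  have h1 : a * b ^ 2 = z * b ^ 2 := by
    calc a * b ^ 2 = (a * b) * b := by rw [pow_two, ← mul_assoc]
      _ = (b * z) * b := by rw [hab]
      _ = z * b ^ 2 := by rw [pow_two]; ac_rfl
  have h2 : b * b ^ 2 = x * b ^ 2 := by
    calc b * b ^ 2 = (b ^ 3 * x) * x := by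
          rw [mul_assoc, hxx, mul_one, ← pow_succ']
      _ = b ^ 2 * x := by rw [hbx]
      _ = x * b ^ 2 := mul_comm _ _
  have h3 : z * (z * b ^ 2) = b ^ 2 := by
    have h := congrArg (· ^ 2) habz
    calc z * (z * b ^ 2) = (a * a) * (z * (z * b ^ 2)) := by rw [← pow_two, ha, one_mul]
      _ = (a * b * z) ^ 2 := by rw [mul_pow, mul_pow, pow_two a, pow_two z, pow_two]; ac_rfl
      _ = b ^ 2 := h
  intro u hu g hg
  simp only [Set.mem_insert_iff, Set.mem_singleton_iff] at hu hg ⊢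
  rcases hg with h | h | h | h <;> rcases hu with rfl | rfl | rfl | rfl <;> rw [h]
  -- g = x
  · exact .inr (.inl rfl)
  · exact .inl (by rw [← mul_assoc, hxx, one_mul])
  · exact .inr (.inr (.inr (by rw [← mul_assoc])))
  · exact .inr (.inr (.inl (by rw [← mul_assoc, ← mul_assoc, hxx, one_mul])))
  -- g = z
  · exact .inr (.inr (.inl rfl))
  · exact .inr (.inr (.inr (by rw [mul_left_comm, ← mul_assoc])))
  · exact .inl h3
  · exact .inr (.inl (by rw [show z * (x * z * b ^ 2) = x * (z * (z * b ^ 2)) from by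
      rw [mul_assoc x z]; ac_rfl, h3]))
  -- g = a
  · exact .inr (.inr (.inl h1))
  · exact .inr (.inr (.inr (by rw [mul_left_comm, h1, ← mul_assoc])))
  · exact .inl (by rw [mul_left_comm, h1, h3])
  · exact .inr (.inl (by rw [show a * (x * z * b ^ 2) = x * (z * (a * b ^ 2)) from by
      ac_rfl, h1, h3]))
  -- g = b
  · exact .inr (.inl h2)
  · exact .inl (by rw [mul_left_comm, h2, ← mul_assoc, hxx, one_mul])
  · exact .inr (.inr (.inr (by rw [mul_left_comm, h2]; ac_rfl)))
  · exact .inr (.inr (.inl (by rw [show b * (x * z * b ^ 2) = x * (z * (b * b ^ 2)) from by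
      ac_rfl, h2, show x * (z * (x * b ^ 2)) = (x * x) * (z * b ^ 2) from by ac_rfl,
      hxx, one_mul])))
end

section
/- In the commutative monoid Q presented by ⟨x, z, a, b | x² = 1, a² = 1, z⁴ = z², b⁴ = b², abz = b, b³x = b², z³a = z²⟩, the set {b², x*b², z*b², x*z*b²} with multiplication of Q is a group with identity b², each of whose non-identity elements has order two (i.e., it is isomorphic to the Klein four-group Z₂ × Z₂). -/
/-!
Since `b⁴ = b²`, the element `e = b²` is idempotent, and both `x` and `z` square to the identity
on `e`: `x² = 1`, while squaring `abz = b` and using `a² = 1` gives `z²b² = b²`. Hence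
`{e, xe, ze, xze}` is the image of the Klein four-group `⟨x, z | x² = z² = 1⟩` under `u ↦ ue`.
-/

section KleinFour

variable {M : Type*} [CommMonoid M] {e g h : M}

theorem mul_mem_klein (he : e * e = e) (hg : g * g * e = e) (hh : h * h * e = e) :
    ∀ u ∈ ({e, g * e, h * e, g * h * e} : Set M), ∀ v ∈ ({e, g * e, h * e, g * h * e} : Set M),
      u * v ∈ ({e, g * e, h * e, g * h * e} : Set M) := by
  simp only [Set.mem_insert_iff, Set.mem_singleton_iff]
  rintro u (rfl | rfl | rfl | rfl) v (rfl | rfl | rfl | rfl) <;> grind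

theorem idempotent_mul_eq_of_mem_klein (he : e * e = e) :
    ∀ u ∈ ({e, g * e, h * e, g * h * e} : Set M), e * u = u := by
  simp only [Set.mem_insert_iff, Set.mem_singleton_iff]
  rintro u (rfl | rfl | rfl | rfl) <;> grind

theorem mul_self_eq_of_mem_klein (he : e * e = e) (hg : g * g * e = e) (hh : h * h * e = e) :
    ∀ u ∈ ({e, g * e, h * e, g * h * e} : Set M), u * u = e := by
  simp only [Set.mem_insert_iff, Set.mem_singleton_iff]
  rintro u (rfl | rfl | rfl | rfl) <;> grind

end KleinFour

theorem mul_mul_sq_eq_sq_of_mul_mul_eq {M : Type*} [CommMonoid M] {a b z : M} (ha : a ^ 2 = 1)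
    (habz : a * b * z = b) : z * z * b ^ 2 = b ^ 2 := by
  calc z * z * b ^ 2 = (a * b * z) ^ 2 := by rw [mul_pow, mul_pow, ha, one_mul, ← sq, mul_comm]
    _ = b ^ 2 := by rw [habz]

theorem stmt14_general {Q : Type*} [CommMonoid Q] (x z a b : Q)
    (hx : x ^ 2 = 1) (ha : a ^ 2 = 1) (hb : b ^ 4 = b ^ 2)
    (habz : a * b * z = b) :
    (∀ u ∈ ({b ^ 2, x * b ^ 2, z * b ^ 2, x * z * b ^ 2} : Set Q),
      ∀ v ∈ ({b ^ 2, x * b ^ 2, z * b ^ 2, x * z * b ^ 2} : Set Q),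
        u * v ∈ ({b ^ 2, x * b ^ 2, z * b ^ 2, x * z * b ^ 2} : Set Q)) ∧
    (∀ u ∈ ({b ^ 2, x * b ^ 2, z * b ^ 2, x * z * b ^ 2} : Set Q), b ^ 2 * u = u) ∧
    (∀ u ∈ ({b ^ 2, x * b ^ 2, z * b ^ 2, x * z * b ^ 2} : Set Q), u * u = b ^ 2) := by
  have hidem : b ^ 2 * b ^ 2 = b ^ 2 := by rw [← pow_add, hb]
  have hxx : x * x * b ^ 2 = b ^ 2 := by rw [← sq, hx, one_mul]
  have hzz : z * z * b ^ 2 = b ^ 2 := mul_mul_sq_eq_sq_of_mul_mul_eq ha habz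
  exact ⟨mul_mem_klein hidem hxx hzz, idempotent_mul_eq_of_mem_klein hidem,
    mul_self_eq_of_mem_klein hidem hxx hzz⟩

/-- In the misère quotient of 0.123, `{b², xb², zb², xzb²}` is a group with
identity `b²`, each of whose elements squares to `b²` (a Klein four-group). -/
theorem stmt14 {Q : Type*} [CommMonoid Q] (x z a b : Q)
    (hx : x ^ 2 = 1) (ha : a ^ 2 = 1) (hz : z ^ 4 = z ^ 2) (hb : b ^ 4 = b ^ 2)
    (habz : a * b * z = b) (hbx : b ^ 3 * x = b ^ 2) (hza : z ^ 3 * a = z ^ 2) :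
    (∀ u ∈ ({b ^ 2, x * b ^ 2, z * b ^ 2, x * z * b ^ 2} : Set Q),
      ∀ v ∈ ({b ^ 2, x * b ^ 2, z * b ^ 2, x * z * b ^ 2} : Set Q),
        u * v ∈ ({b ^ 2, x * b ^ 2, z * b ^ 2, x * z * b ^ 2} : Set Q)) ∧
    (∀ u ∈ ({b ^ 2, x * b ^ 2, z * b ^ 2, x * z * b ^ 2} : Set Q), b ^ 2 * u = u) ∧
    (∀ u ∈ ({b ^ 2, x * b ^ 2, z * b ^ 2, x * z * b ^ 2} : Set Q), u * u = b ^ 2) :=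
  stmt14_general x z a b hx ha hb habz
end

section
/- In the commutative monoid Q presented by ⟨x, z, a, b | x² = 1, a² = 1, z⁴ = z², b⁴ = b², abz = b, b³x = b², z³a = z²⟩, the set {z², x*z², z³, x*z³} is a group under the multiplication of Q with identity z², isomorphic to the Klein four-group: every element squares to z². -/
/-! Since `z⁴ = z²`, the element `e = z²` is idempotent with `e z³ = z³` and `z³ z³ = e`, so `e` is
an identity on the set and multiplication by `x` or by `z³` maps it to itself. Every element is
`x^i z^j` with `j ∈ {2, 3}`, which gives closure, and squaring removes both `x` (as `x² = 1`) and
the extra `z`. -/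

section PowFourEqSq

variable {M : Type*} [Monoid M] {z : M}

theorem sq_mul_sq_of_pow_four_eq_sq (hz : z ^ 4 = z ^ 2) : z ^ 2 * z ^ 2 = z ^ 2 := by
  rw [← pow_add, hz]

theorem sq_mul_pow_three_of_pow_four_eq_sq (hz : z ^ 4 = z ^ 2) : z ^ 2 * z ^ 3 = z ^ 3 := by
  rw [← pow_add, pow_succ, hz, ← pow_succ]

theorem pow_three_mul_pow_three_of_pow_four_eq_sq (hz : z ^ 4 = z ^ 2) :
    z ^ 3 * z ^ 3 = z ^ 2 := by
  rw [← pow_add, show 3 + 3 = 4 + 2 from rfl, pow_add, hz, ← pow_add, hz]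

end PowFourEqSq

theorem mul_mul_cancel_left_of_sq_eq_one {M : Type*} [Monoid M] {x : M} (hx : x ^ 2 = 1)
    (w : M) : x * (x * w) = w := by
  rw [← mul_assoc, ← sq, hx, one_mul]

theorem stmt15_general {Q : Type*} [CommMonoid Q] (x z : Q)
    (hx : x ^ 2 = 1) (hz : z ^ 4 = z ^ 2) :
    (∀ u ∈ ({z ^ 2, x * z ^ 2, z ^ 3, x * z ^ 3} : Set Q),
      ∀ v ∈ ({z ^ 2, x * z ^ 2, z ^ 3, x * z ^ 3} : Set Q),
        u * v ∈ ({z ^ 2, x * z ^ 2, z ^ 3, x * z ^ 3} : Set Q)) ∧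
    (∀ u ∈ ({z ^ 2, x * z ^ 2, z ^ 3, x * z ^ 3} : Set Q), z ^ 2 * u = u) ∧
    (∀ u ∈ ({z ^ 2, x * z ^ 2, z ^ 3, x * z ^ 3} : Set Q), u * u = z ^ 2) := by
  set S : Set Q := {z ^ 2, x * z ^ 2, z ^ 3, x * z ^ 3}
  have h22 := sq_mul_sq_of_pow_four_eq_sq hz
  have h23 := sq_mul_pow_three_of_pow_four_eq_sq hz
  have h33 := pow_three_mul_pow_three_of_pow_four_eq_sq hz
  have hxx := mul_mul_cancel_left_of_sq_eq_one hx
  have hx2 : x * x = 1 := by rw [← sq, hx]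
  have identity : ∀ u ∈ S, z ^ 2 * u = u := by
    rintro u (rfl | rfl | rfl | rfl) <;> simp only [mul_left_comm (z ^ 2) x, h22, h23]
  have mul_x : ∀ u ∈ S, x * u ∈ S := by
    rintro u (rfl | rfl | rfl | rfl) <;> simp [S, hxx]
  have mul_z3 : ∀ u ∈ S, z ^ 3 * u ∈ S := by
    rintro u (rfl | rfl | rfl | rfl) <;>
      simp [S, mul_left_comm (z ^ 3) x, mul_comm (z ^ 3), h23, h33]
  refine ⟨fun u hu v hv => ?_, identity, ?_⟩
  · rcases hv with rfl | rfl | rfl | rfl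
    · rwa [mul_comm, identity u hu]
    · rw [show u * (x * z ^ 2) = x * (z ^ 2 * u) by ac_rfl, identity u hu]; exact mul_x u hu
    · rw [mul_comm]; exact mul_z3 u hu
    · rw [show u * (x * z ^ 3) = x * (z ^ 3 * u) by ac_rfl]; exact mul_x _ (mul_z3 u hu)
  · rintro u (rfl | rfl | rfl | rfl) <;>
      simp only [mul_mul_mul_comm x, hx2, one_mul, h22, h33]

/-- In the misère quotient of 0.123, `{z², xz², z³, xz³}` is a group with
identity `z²`, each of whose elements squares to `z²` (a Klein four-group). -/
theorem stmt15 {Q : Type*} [CommMonoid Q] (x z a b : Q)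
    (hx : x ^ 2 = 1) (ha : a ^ 2 = 1) (hz : z ^ 4 = z ^ 2) (hb : b ^ 4 = b ^ 2)
    (habz : a * b * z = b) (hbx : b ^ 3 * x = b ^ 2) (hza : z ^ 3 * a = z ^ 2) :
    (∀ u ∈ ({z ^ 2, x * z ^ 2, z ^ 3, x * z ^ 3} : Set Q),
      ∀ v ∈ ({z ^ 2, x * z ^ 2, z ^ 3, x * z ^ 3} : Set Q),
        u * v ∈ ({z ^ 2, x * z ^ 2, z ^ 3, x * z ^ 3} : Set Q)) ∧
    (∀ u ∈ ({z ^ 2, x * z ^ 2, z ^ 3, x * z ^ 3} : Set Q), z ^ 2 * u = u) ∧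
    (∀ u ∈ ({z ^ 2, x * z ^ 2, z ^ 3, x * z ^ 3} : Set Q), u * u = z ^ 2) :=
  stmt15_general x z hx hz
end

section
/- In the commutative monoid Q presented by ⟨x, z, a, b | x² = 1, a² = 1, z⁴ = z², b⁴ = b², abz = b, b³x = b², z³a = z²⟩, the product of any two elements of the set {b, x*b, z*b, x*z*b} lies in the ideal {b², x*b², z*b², x*z*b²}; moreover all such products modulo this ideal are equal (the Rees factor S₄/S₅ is a null semigroup). -/
/-!
Since `a² = 1`, the relation `a b z = b` gives `z b = a b`, so the four elements are
`b, x b, a b, x a b`, that is `k b` for `k` in the group `{1, x, a, x a}` generated by two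
commuting involutions. A product of two of them is `k k' b²` with `k k'` again in that group,
and `a b² = z b²` turns it back into one of `b², x b², z b², x z b²`.
-/

theorem pow_eq_one_or_eq_self_of_sq_eq_one {M : Type*} [Monoid M] {x : M} (hx : x ^ 2 = 1)
    (n : ℕ) : x ^ n = 1 ∨ x ^ n = x := by
  rw [← Nat.mod_add_div n 2, pow_add, pow_mul, hx, one_pow, mul_one]
  rcases Nat.mod_two_eq_zero_or_one n with h | h <;> simp [h]

section CommMonoid

variable {M : Type*} [CommMonoid M] {x a : M}

theorem pow_mul_pow_mul_mem_of_sq_eq_one (hx : x ^ 2 = 1) (ha : a ^ 2 = 1) (i j : ℕ) (c : M) :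
    x ^ i * a ^ j * c ∈ ({c, x * c, a * c, x * a * c} : Set M) := by
  rcases pow_eq_one_or_eq_self_of_sq_eq_one hx i with hi | hi <;>
    rcases pow_eq_one_or_eq_self_of_sq_eq_one ha j with hj | hj <;>
    simp [hi, hj]

theorem exists_pow_mul_pow_mul_of_mem {u b : M}
    (hu : u ∈ ({b, x * b, a * b, x * a * b} : Set M)) : ∃ i j : ℕ, u = x ^ i * a ^ j * b := by
  rcases hu with rfl | rfl | rfl | rfl
  exacts [⟨0, 0, by simp⟩, ⟨1, 0, by simp⟩, ⟨0, 1, by simp⟩, ⟨1, 1, by simp⟩]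

theorem mul_mem_of_sq_eq_one (hx : x ^ 2 = 1) (ha : a ^ 2 = 1) {u v b : M}
    (hu : u ∈ ({b, x * b, a * b, x * a * b} : Set M))
    (hv : v ∈ ({b, x * b, a * b, x * a * b} : Set M)) :
    u * v ∈ ({b ^ 2, x * b ^ 2, a * b ^ 2, x * a * b ^ 2} : Set M) := by
  obtain ⟨i, j, rfl⟩ := exists_pow_mul_pow_mul_of_mem hu
  obtain ⟨k, l, rfl⟩ := exists_pow_mul_pow_mul_of_mem hv
  have h : x ^ i * a ^ j * b * (x ^ k * a ^ l * b) = x ^ (i + k) * a ^ (j + l) * b ^ 2 := by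
    rw [pow_add, pow_add, sq]
    ac_rfl
  rw [h]
  exact pow_mul_pow_mul_mem_of_sq_eq_one hx ha _ _ _

theorem mul_eq_mul_of_mul_mul_eq_self (ha : a ^ 2 = 1) {b z : M} (h : a * b * z = b) :
    z * b = a * b := by
  calc z * b = a ^ 2 * (b * z) := by rw [ha, one_mul, mul_comm]
    _ = a * (a * b * z) := by rw [sq]; ac_rfl
    _ = a * b := by rw [h]

end CommMonoid

theorem stmt16_general {Q : Type*} [CommMonoid Q] (x z a b : Q)
    (hx : x ^ 2 = 1) (ha : a ^ 2 = 1)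
    (habz : a * b * z = b) :
    ∀ u ∈ ({b, x * b, z * b, x * z * b} : Set Q),
      ∀ v ∈ ({b, x * b, z * b, x * z * b} : Set Q),
        u * v ∈ ({b ^ 2, x * b ^ 2, z * b ^ 2, x * z * b ^ 2} : Set Q) := by
  intro u hu v hv
  have hzb : z * b = a * b := mul_eq_mul_of_mul_mul_eq_self ha habz
  have hzb2 : z * b ^ 2 = a * b ^ 2 := by rw [sq, ← mul_assoc, hzb, mul_assoc]
  rw [mul_assoc x z b, hzb, ← mul_assoc x a b] at hu hv
  rw [mul_assoc x z, hzb2, ← mul_assoc x a]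
  exact mul_mem_of_sq_eq_one hx ha hu hv

/-- In the misère quotient of 0.123, the product of any two elements of
`{b, xb, zb, xzb}` lies in the ideal `{b², xb², zb², xzb²}`. -/
theorem stmt16 {Q : Type*} [CommMonoid Q] (x z a b : Q)
    (hx : x ^ 2 = 1) (ha : a ^ 2 = 1) (hz : z ^ 4 = z ^ 2) (hb : b ^ 4 = b ^ 2)
    (habz : a * b * z = b) (hbx : b ^ 3 * x = b ^ 2) (hza : z ^ 3 * a = z ^ 2) :
    ∀ u ∈ ({b, x * b, z * b, x * z * b} : Set Q),
      ∀ v ∈ ({b, x * b, z * b, x * z * b} : Set Q),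
        u * v ∈ ({b ^ 2, x * b ^ 2, z * b ^ 2, x * z * b ^ 2} : Set Q) :=
  stmt16_general x z a b hx ha habz
end

section
/- Every finitely generated commutative monoid is finitely presented (Rédei's theorem). -/
open Finsupp

noncomputable section RedeiSection

namespace RedeiAux

variable {n : ℕ}

abbrev A (n : ℕ) := AddMonoidAlgebra ℚ (Fin n →₀ ℕ)

instance : IsNoetherianRing (A n) :=
  isNoetherianRing_of_ringEquiv (MvPolynomial (Fin n) ℚ) (RingEquiv.refl _)

/-- the binomial attached to a pair of exponent vectors -/
def bin (p : (Fin n →₀ ℕ) × (Fin n →₀ ℕ)) : A n :=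
  AddMonoidAlgebra.single p.1 (1:ℚ) - AddMonoidAlgebra.single p.2 1

/-- Key lemma: a binomial `X^a - X^b` lies in the ideal generated by all the
binomials of a congruence `c` iff `c a b`. -/
lemma span_bin_iff (c : AddCon (Fin n →₀ ℕ)) (a b : Fin n →₀ ℕ) :
    bin (a, b) ∈ Ideal.span (bin '' {p : (Fin n →₀ ℕ) × (Fin n →₀ ℕ) | c p.1 p.2}) ↔ c a b := by
  constructor
  · intro h
    set ψ : A n →+* AddMonoidAlgebra ℚ c.Quotient :=
      AddMonoidAlgebra.mapDomainRingHom ℚ c.mk' with hψ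
    have key : ∀ x : Fin n →₀ ℕ, ψ (AddMonoidAlgebra.single x (1:ℚ)) =
        AddMonoidAlgebra.single (x : c.Quotient) 1 := by
      intro x
      simp [hψ, Finsupp.mapDomain_single, AddMonoidAlgebra.mapDomain_single, AddCon.coe_mk']
    have hker : Ideal.span (bin '' {p : (Fin n →₀ ℕ) × (Fin n →₀ ℕ) | c p.1 p.2}) ≤
        RingHom.ker ψ := by
      rw [Ideal.span_le]
      rintro x ⟨⟨u, v⟩, huv, rfl⟩
      have huv' : c u v := huv
      have : ψ (bin (u, v)) = 0 := by
        rw [bin, map_sub, key, key, sub_eq_zero, (AddCon.eq c).2 huv']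
      exact this
    have h0 : ψ (bin (a, b)) = 0 := hker h
    rw [bin, map_sub, key, key, sub_eq_zero] at h0
    have : ((a : c.Quotient)) = b :=
      AddMonoidAlgebra.single_left_injective (one_ne_zero (α := ℚ)) h0
    exact (AddCon.eq c).1 this
  · intro h
    exact Ideal.subset_span ⟨(a, b), h, rfl⟩

/-- By noetherianity, finitely many pairs of a congruence suffice to generate
the binomial ideal. -/
lemma exists_finset_pairs (c : AddCon (Fin n →₀ ℕ)) :
    ∃ T : Finset ((Fin n →₀ ℕ) × (Fin n →₀ ℕ)),
      (∀ p ∈ T, c p.1 p.2) ∧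
      Ideal.span (bin '' {p : (Fin n →₀ ℕ) × (Fin n →₀ ℕ) | c p.1 p.2}) ≤
        Ideal.span (bin '' (T : Set ((Fin n →₀ ℕ) × (Fin n →₀ ℕ)))) := by
  classical
  set E : Set ((Fin n →₀ ℕ) × (Fin n →₀ ℕ)) := {p | c p.1 p.2} with hE
  obtain ⟨G, hG⟩ : (Ideal.span (bin '' E)).FG := IsNoetherian.noetherian _
  choose t ht hmem using fun (g : A n) (hg : g ∈ G) =>
    Submodule.mem_span_finite_of_mem_span
      (S := bin '' E) (R := A n) (x := g)
      (by
        have h : g ∈ Ideal.span ((G : Set (A n))) := Ideal.subset_span hg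
        rwa [hG] at h)
  set U : Finset (A n) := G.attach.biUnion (fun g => t g.1 g.2) with hU
  have hUE : (U : Set (A n)) ⊆ bin '' E := by
    intro x hx
    simp only [hU, Finset.coe_biUnion, Set.mem_iUnion] at hx
    obtain ⟨g, -, hx⟩ := hx
    exact ht g.1 g.2 hx
  have hGU : (G : Set (A n)) ⊆ (Ideal.span ((U : Set (A n))) : Set (A n)) := by
    intro g hg
    refine Ideal.span_mono ?_ (hmem g hg)
    intro x hx
    simp only [hU, Finset.coe_biUnion, Set.mem_iUnion]
    exact ⟨⟨g, hg⟩, by simp, hx⟩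
  obtain ⟨F, hFE, hFfin, hUF⟩ :
      ∃ F ⊆ E, F.Finite ∧ (U : Set (A n)) ⊆ bin '' F := by
    have : ∃ s ⊆ bin '' E, s.Finite ∧ (U : Set (A n)) ⊆ s :=
      ⟨U, hUE, U.finite_toSet, subset_rfl⟩
    simpa using Set.exists_subset_image_finite_and.1 this
  refine ⟨hFfin.toFinset, ?_, ?_⟩
  · intro p hp
    exact hFE (hFfin.mem_toFinset.1 hp)
  · rw [← hG, Ideal.span_le]
    intro g hg
    have h2 : g ∈ Ideal.span (bin '' F) := Ideal.span_mono hUF (hGU hg)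
    have h3 : bin '' F = bin '' (hFfin.toFinset : Set ((Fin n →₀ ℕ) × (Fin n →₀ ℕ))) := by
      rw [hFfin.coe_toFinset]
    rw [h3] at h2
    exact h2

end RedeiAux

end RedeiSection

/-- Rédei's theorem: every finitely generated commutative monoid (written
additively) is finitely presented, i.e. isomorphic to a quotient of a free
commutative monoid `Fin n →₀ ℕ` by a congruence generated by finitely many
pairs. -/
theorem redei_finitely_generated_comm_monoid_is_finitely_presented
    (M : Type) [AddCommMonoid M]
    (hfg : ∃ (n : ℕ) (f : (Fin n →₀ ℕ) →+ M), Function.Surjective f) :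
    ∃ (n : ℕ) (S : Finset ((Fin n →₀ ℕ) × (Fin n →₀ ℕ))),
      Nonempty ((addConGen (fun u v => (u, v) ∈ S)).Quotient ≃+ M) := by
  obtain ⟨n, f, hf⟩ := hfg
  set c : AddCon (Fin n →₀ ℕ) := AddCon.ker f with hc
  obtain ⟨T, hTc, hTspan⟩ := RedeiAux.exists_finset_pairs c
  refine ⟨n, T, ?_⟩
  have hceq : addConGen (fun u v => (u, v) ∈ T) = c := by
    apply le_antisymm
    · exact AddCon.addConGen_le.2 (fun u v h => hTc (u, v) h)
    · intro a b hab
      set c' := addConGen (fun u v => (u, v) ∈ T) with hc'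
      have h1 : RedeiAux.bin (a, b) ∈
          Ideal.span (RedeiAux.bin '' {p : (Fin n →₀ ℕ) × (Fin n →₀ ℕ) | c p.1 p.2}) :=
        (RedeiAux.span_bin_iff c a b).2 hab
      have h2 : Ideal.span (RedeiAux.bin '' (T : Set ((Fin n →₀ ℕ) × (Fin n →₀ ℕ)))) ≤
          Ideal.span (RedeiAux.bin '' {p : (Fin n →₀ ℕ) × (Fin n →₀ ℕ) | c' p.1 p.2}) := by
        apply Ideal.span_mono
        apply Set.image_mono
        intro p hp
        show c' p.1 p.2
        exact AddConGen.Rel.of p.1 p.2 hp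
      exact (RedeiAux.span_bin_iff c' a b).1 (h2 (hTspan h1))
  exact ⟨(AddCon.congr (AddEquiv.refl _) (by rw [hceq]; rfl)).trans (AddCon.quotientKerEquivOfSurjective f hf)⟩
end
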